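/- Let a > 0 and c > 0, let g(z) = a·(φ(z) − z·Φᶜ(z)) − c, let z* be the unique zero of g, and let w(z) = (a·φ(z) − c)/Φᶜ(z). Then the following are equivalent: (i) z* > 0; (ii) w(z*) > 0; (iii) c < a/√(2π). -/

import Mathlib

open MeasureTheory ProbabilityTheory Real

/- Write `L(z) = φ(z) − z·Φᶜ(z)` (the standard normal loss function), so that `z*` solves
`a·L(z*) = c`. Since `φ' = −zφ`, we get `L' = −Φᶜ < 0`, so `L` is strictly decreasing with
`L(0) = 1/√(2π)`; hence `z* > 0 ↔ c = a·L(z*) < a·L(0)`. Moreover `a·φ(z*) − c = a·z*·Φᶜ(z*)`,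
so `w(z*) = a·z*`, which is positive exactly when `z* > 0`. -/

/-- Standard normal density. -/
noncomputable def stdPdf (x : ℝ) : ℝ := (Real.sqrt (2 * Real.pi))⁻¹ * Real.exp (-(x ^ 2) / 2)

/-- Standard normal CDF. -/
noncomputable def stdCdf (x : ℝ) : ℝ := ∫ u in Set.Iic x, stdPdf u

/-- Standard normal complementary CDF. -/
noncomputable def stdCcdf (x : ℝ) : ℝ := 1 - stdCdf x

/-- Standard normal hazard rate. -/
noncomputable def hazard (x : ℝ) : ℝ := stdPdf x / stdCcdf x

lemma stdPdf_eq_gaussianPDFReal : stdPdf = gaussianPDFReal 0 1 := by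
  ext x
  simp [stdPdf, gaussianPDFReal]

lemma stdPdf_pos (x : ℝ) : 0 < stdPdf x := by
  unfold stdPdf
  positivity

lemma continuous_stdPdf : Continuous stdPdf := by
  unfold stdPdf
  fun_prop

lemma integrable_stdPdf : Integrable stdPdf := by
  rw [stdPdf_eq_gaussianPDFReal]
  exact integrable_gaussianPDFReal 0 1

lemma integral_stdPdf : ∫ x, stdPdf x = 1 := by
  rw [stdPdf_eq_gaussianPDFReal]
  exact integral_gaussianPDFReal_eq_one 0 one_ne_zero

lemma stdCcdf_eq_integral_Ioi (x : ℝ) : stdCcdf x = ∫ u in Set.Ioi x, stdPdf u := by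
  rw [stdCcdf, stdCdf, ← integral_stdPdf, ← intervalIntegral.integral_Iic_add_Ioi
    integrable_stdPdf.integrableOn integrable_stdPdf.integrableOn]
  ring

lemma stdCcdf_pos (x : ℝ) : 0 < stdCcdf x := by
  rw [stdCcdf_eq_integral_Ioi, setIntegral_pos_iff_support_of_nonneg_ae
    (ae_of_all _ fun y => (stdPdf_pos y).le) integrable_stdPdf.integrableOn,
    Function.support_eq_univ fun y => (stdPdf_pos y).ne', Set.univ_inter]
  simp

lemma hasDerivAt_stdPdf (x : ℝ) : HasDerivAt stdPdf (-x * stdPdf x) x := by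
  have hexponent : HasDerivAt (fun y : ℝ => -(y ^ 2) / 2) (-x) x :=
    (((hasDerivAt_id' x).fun_pow 2).fun_neg.div_const 2).congr_deriv (by norm_num; ring)
  exact (hexponent.exp.const_mul _).congr_deriv (by rw [stdPdf]; ring)

lemma hasDerivAt_stdCdf (x : ℝ) : HasDerivAt stdCdf (stdPdf x) x := by
  have hsplit : ∀ y, stdCdf y = stdCdf 0 + ∫ u in (0 : ℝ)..y, stdPdf u := fun y => by
    rw [stdCdf, stdCdf, ← intervalIntegral.integral_Iic_sub_Iic
      integrable_stdPdf.integrableOn integrable_stdPdf.integrableOn]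
    ring
  rw [funext hsplit]
  exact ((continuous_stdPdf.integral_hasStrictDerivAt 0 x).hasDerivAt).const_add _

lemma hasDerivAt_stdCcdf (x : ℝ) : HasDerivAt stdCcdf (-stdPdf x) x :=
  (hasDerivAt_stdCdf x).const_sub 1

noncomputable def stdNormalLoss (z : ℝ) : ℝ := stdPdf z - z * stdCcdf z

lemma hasDerivAt_stdNormalLoss (z : ℝ) : HasDerivAt stdNormalLoss (-stdCcdf z) z :=
  ((hasDerivAt_stdPdf z).sub ((hasDerivAt_id' z).mul (hasDerivAt_stdCcdf z))).congr_deriv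
    (by ring)

lemma strictAnti_stdNormalLoss : StrictAnti stdNormalLoss :=
  strictAnti_of_hasDerivAt_neg hasDerivAt_stdNormalLoss fun z => neg_neg_of_pos (stdCcdf_pos z)

lemma stdNormalLoss_zero : stdNormalLoss 0 = (Real.sqrt (2 * Real.pi))⁻¹ := by
  simp [stdNormalLoss, stdPdf]

theorem viability_equivalences_general (a c zstar : ℝ) (ha : 0 < a)
    (hz : a * (stdPdf zstar - zstar * stdCcdf zstar) - c = 0) :
    (0 < zstar ↔ 0 < (a * stdPdf zstar - c) / stdCcdf zstar) ∧
    (0 < zstar ↔ c < a / Real.sqrt (2 * Real.pi)) := by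
  have hcost : c = a * stdNormalLoss zstar := by rw [stdNormalLoss]; linarith
  have hw : (a * stdPdf zstar - c) / stdCcdf zstar = a * zstar := by
    rw [hcost, stdNormalLoss, div_eq_iff (stdCcdf_pos zstar).ne']
    ring
  refine ⟨by rw [hw, mul_pos_iff_of_pos_left ha], ?_⟩
  rw [hcost, div_eq_mul_inv, ← stdNormalLoss_zero, mul_lt_mul_iff_right₀ ha]
  exact strictAnti_stdNormalLoss.lt_iff_gt.symm

/-- Viability of the non-delegated selection process. If `z*` is the (unique) zero of
`g(z) = a·(φ(z) − z·Φᶜ(z)) − c`, then the following are equivalent: (i) `z* > 0`;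
(ii) the optimal per-hire net utility `w(z*) = (a·φ(z*) − c)/Φᶜ(z*)` is positive;
(iii) `c < a/√(2π)`. -/
theorem viability_equivalences (a c zstar : ℝ) (ha : 0 < a) (hc : 0 < c)
    (hz : a * (stdPdf zstar - zstar * stdCcdf zstar) - c = 0) :
    (0 < zstar ↔ 0 < (a * stdPdf zstar - c) / stdCcdf zstar) ∧
    (0 < zstar ↔ c < a / Real.sqrt (2 * Real.pi)) :=
  viability_equivalences_general a c zstar ha hz
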